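/- Let C be a model category, let f : A ⟶ B be a weak equivalence between fibrant objects, and let p : X ⟶ B be a fibration. Then, assuming the pullback A ×_B X exists, the base-change morphism (second projection) A ×_B X ⟶ X is a weak equivalence. -/

import Mathlib

open CategoryTheory CategoryTheory.Limits

universe u v

/-- `g` is a retract of `f` in the arrow category. -/
def IsArrowRetract {C : Type u} [Category.{v} C] {X Y A B : C}
    (g : X ⟶ Y) (f : A ⟶ B) : Prop :=
  ∃ (i : X ⟶ A) (r : A ⟶ X) (i' : Y ⟶ B) (r' : B ⟶ Y),
    i ≫ r = 𝟙 X ∧ i' ≫ r' = 𝟙 Y ∧ i ≫ f = g ≫ i' ∧ f ≫ r' = r ≫ g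

/-- A model structure (in Quillen's sense) on a category with finite limits and
colimits: three classes of morphisms satisfying two-out-of-three, stability
under retracts, the lifting axioms, and the factorization axioms. -/
structure ModelStructure (C : Type u) [Category.{v} C]
    [HasFiniteLimits C] [HasFiniteColimits C] where
  weq : MorphismProperty C
  fib : MorphismProperty C
  cof : MorphismProperty C
  weq_comp : ∀ {X Y Z : C} (f : X ⟶ Y) (g : Y ⟶ Z), weq f → weq g → weq (f ≫ g)
  weq_of_comp_left : ∀ {X Y Z : C} (f : X ⟶ Y) (g : Y ⟶ Z),
    weq f → weq (f ≫ g) → weq g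
  weq_of_comp_right : ∀ {X Y Z : C} (f : X ⟶ Y) (g : Y ⟶ Z),
    weq g → weq (f ≫ g) → weq f
  weq_retract : ∀ {X Y A B : C} (g : X ⟶ Y) (f : A ⟶ B),
    IsArrowRetract g f → weq f → weq g
  fib_retract : ∀ {X Y A B : C} (g : X ⟶ Y) (f : A ⟶ B),
    IsArrowRetract g f → fib f → fib g
  cof_retract : ∀ {X Y A B : C} (g : X ⟶ Y) (f : A ⟶ B),
    IsArrowRetract g f → cof f → cof g
  lift_triv_cof_fib : ∀ {A B X Y : C} (i : A ⟶ B) (p : X ⟶ Y),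
    cof i → weq i → fib p → HasLiftingProperty i p
  lift_cof_triv_fib : ∀ {A B X Y : C} (i : A ⟶ B) (p : X ⟶ Y),
    cof i → fib p → weq p → HasLiftingProperty i p
  factor_triv_cof_fib : ∀ {X Y : C} (f : X ⟶ Y),
    ∃ (Z : C) (i : X ⟶ Z) (p : Z ⟶ Y), cof i ∧ weq i ∧ fib p ∧ i ≫ p = f
  factor_cof_triv_fib : ∀ {X Y : C} (f : X ⟶ Y),
    ∃ (Z : C) (i : X ⟶ Z) (p : Z ⟶ Y), cof i ∧ fib p ∧ weq p ∧ i ≫ p = f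

/-!
Factor `f` as a trivial cofibration `j : A ⟶ E` followed by a fibration; the latter is a trivial
fibration, and these are stable under base change. As `A` is fibrant, `j` has a retraction `r`
and a homotopy `K` from `𝟙 E` to `r ≫ j` which is constant on `A`. For a fibration `q : W ⟶ E`,
lift the homotopy `q ≫ K` along `q`, after replacing `W` by a trivial fibration `Z ⟶ W`. The end
point of the lifted homotopy lies over the image of `j`, and this exhibits `A ×_E W ⟶ W` as a
retract of a weak equivalence.
-/

namespace HomotopicalAlgebra

variable {C : Type u} [Category.{v} C]

attribute [local simp] prod.lift_fst prod.lift_snd pullback.lift_fst pullback.lift_snd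
  pullback.lift_fst_assoc pullback.lift_snd_assoc

lemma weakEquivalence_of_retraction [CategoryWithWeakEquivalences C]
    [(weakEquivalences C).IsStableUnderRetracts] {X Y Z : C} {s : X ⟶ Y} {v : Y ⟶ X}
    (hsv : s ≫ v = 𝟙 X) (u : X ⟶ Z) [WeakEquivalence (v ≫ u)] : WeakEquivalence u := by
  have h : RetractArrow u (v ≫ u) :=
    { i := Arrow.homMk s (𝟙 Z) (by simp [reassoc_of% hsv])
      r := Arrow.homMk v (𝟙 Z) }
  rw [weakEquivalence_iff] at *
  exact MorphismProperty.of_retract h ‹_›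

variable [ModelCategory C]

lemma exists_strongDeformationRetraction {A E : C} (j : A ⟶ E) [Cofibration j]
    [WeakEquivalence j] [IsFibrant A] (P : PathObject E) [P.IsGood] :
    ∃ (r : E ⟶ A) (K : E ⟶ P.P), j ≫ r = 𝟙 A ∧ j ≫ K = j ≫ P.ι ∧
      K ≫ P.p₀ = 𝟙 E ∧ K ≫ P.p₁ = r ≫ j := by
  have sqr : CommSq (𝟙 A) j (terminal.from A) (terminal.from E) := ⟨by simp⟩
  have sqK : CommSq (j ≫ P.ι) j P.p (prod.lift (𝟙 E) (sqr.lift ≫ j)) :=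
    ⟨by ext <;> simp [sqr.fac_left_assoc]⟩
  refine ⟨sqr.lift, sqK.lift, sqr.fac_left, sqK.fac_left, ?_, ?_⟩
  · rw [← P.p_fst, sqK.fac_right_assoc, prod.lift_fst]
  · rw [← P.p_snd, sqK.fac_right_assoc, prod.lift_snd]

/-- A path object for `W` with a map `lift` sending a path `ω` in `W` to its starting point `ω 0`
and the path `q ∘ ω` in `E`; that `lift` is a trivial fibration is the path lifting property
of `q`. -/
structure PathLifting {W E : C} (q : W ⟶ E) (PE : PathObject E) extends PathObject W where
  lift : P ⟶ pullback q PE.p₀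
  lift_fst : lift ≫ pullback.fst q PE.p₀ = p₀
  ι_lift_snd : ι ≫ lift ≫ pullback.snd q PE.p₀ = q ≫ PE.ι
  lift_snd_p₁ : lift ≫ pullback.snd q PE.p₀ ≫ PE.p₁ = p₁ ≫ q
  [fibration_lift : Fibration lift]
  [weakEquivalence_lift : WeakEquivalence lift]

attribute [instance] PathLifting.fibration_lift PathLifting.weakEquivalence_lift

lemma PathLifting.nonempty {W E : C} [IsFibrant E] (q : W ⟶ E) [Fibration q]
    (PE : PathObject E) [PE.IsGood] : Nonempty (PathLifting q PE) := by
  let c₀ : W ⟶ pullback q PE.p₀ := pullback.lift (𝟙 W) (q ≫ PE.ι) (by simp)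
  let c : W ⟶ pullback (pullback.snd q PE.p₀ ≫ PE.p₁) q :=
    pullback.lift c₀ (𝟙 W) (by simp [c₀])
  let F := MorphismProperty.factorizationData (trivialCofibrations C) (fibrations C) c
  have : WeakEquivalence c₀ :=
    weakEquivalence_of_postcomp_of_fac (g := pullback.fst _ _) (fg := 𝟙 W) (by simp [c₀])
  have : WeakEquivalence (F.p ≫ pullback.fst _ _) :=
    weakEquivalence_of_precomp_of_fac (f := F.i) (fg := c₀) (by simp [c])
  exact ⟨{ P := F.Z
           p₀ := F.p ≫ pullback.fst _ _ ≫ pullback.fst _ _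
           p₁ := F.p ≫ pullback.snd _ _
           ι := F.i
           ι_p₀ := by simp [c, c₀]
           ι_p₁ := by simp [c]
           lift := F.p ≫ pullback.fst _ _
           lift_fst := by simp
           ι_lift_snd := by simp [c, c₀]
           lift_snd_p₁ := by simp [pullback.condition] }⟩

theorem weakEquivalence_pullback_snd_of_trivialCofibration {A E W : C} [IsFibrant A]
    [IsFibrant E] (j : A ⟶ E) [Cofibration j] [WeakEquivalence j] (q : W ⟶ E) [Fibration q] :
    WeakEquivalence (pullback.snd j q) := by
  obtain ⟨PE, _⟩ := PathObject.exists_very_good E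
  obtain ⟨r, K, hjr, hjK, hK₀, hK₁⟩ := exists_strongDeformationRetraction j PE
  obtain ⟨L⟩ := PathLifting.nonempty q PE
  -- `pullback n L.lift` parametrises the lifts, starting at `w`, of the path `K (q w)`
  let n : W ⟶ pullback q PE.p₀ := pullback.lift (𝟙 W) (q ≫ K) (by simp [hK₀])
  let θ := pullback.fst n L.lift
  let ℓ := pullback.snd n L.lift
  have hℓ₀ : ℓ ≫ L.p₀ = θ := by
    rw [← L.lift_fst, ← Category.assoc, ← pullback.condition]; simp [n, θ]
  have hℓ₁ : ℓ ≫ L.p₁ ≫ q = θ ≫ q ≫ r ≫ j := by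
    rw [← L.lift_snd_p₁, ← Category.assoc, ← pullback.condition]; simp [n, θ, hK₁]
  have : WeakEquivalence ℓ := weakEquivalence_of_postcomp_of_fac hℓ₀
  let v : pullback n L.lift ⟶ pullback j q := pullback.lift (θ ≫ q ≫ r) (ℓ ≫ L.p₁)
    (by simp [hℓ₁])
  let u := pullback.snd j q
  let ζ : pullback j q ⟶ pullback n L.lift := pullback.lift u (u ≫ L.ι) (by
    ext
    · simp [n, L.lift_fst]
    · simp [n, u, L.ι_lift_snd, ← pullback.condition_assoc, hjK])
  have : WeakEquivalence (v ≫ u) := by simp only [v, u, pullback.lift_snd]; infer_instance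
  have hζv : ζ ≫ v = 𝟙 _ := by
    ext
    · simp [v, ζ, θ, u, ← pullback.condition_assoc, hjr]
    · simp [v, ζ, ℓ, u]
  exact weakEquivalence_of_retraction hζv u

theorem weakEquivalence_pullback_snd_of_isFibrant {A B X : C} (f : A ⟶ B) (p : X ⟶ B)
    [IsFibrant A] [IsFibrant B] [WeakEquivalence f] [Fibration p] :
    WeakEquivalence (pullback.snd f p) := by
  let F := MorphismProperty.factorizationData (trivialCofibrations C) (fibrations C) f
  have : WeakEquivalence F.p := weakEquivalence_of_precomp_of_fac F.fac
  have : IsFibrant F.Z := isFibrant_of_fibration F.p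
  have := weakEquivalence_pullback_snd_of_trivialCofibration F.i (pullback.fst F.p p)
  rw [← F.fac, ← weakEquivalence_precomp_iff (pullbackRightPullbackFstIso F.p p F.i).hom,
    pullbackRightPullbackFstIso_hom_snd]
  infer_instance

end HomotopicalAlgebra

open HomotopicalAlgebra

lemma IsArrowRetract.of_retractArrow {C : Type u} [Category.{v} C] {X Y A B : C}
    {g : X ⟶ Y} {f : A ⟶ B} (h : RetractArrow g f) : IsArrowRetract g f :=
  ⟨h.i.left, h.r.left, h.i.right, h.r.right, h.retract_left, h.retract_right, h.i_w, h.r_w.symm⟩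

abbrev ModelStructure.toModelCategory {C : Type u} [Category.{v} C] [HasFiniteLimits C]
    [HasFiniteColimits C] (M : ModelStructure C) : ModelCategory C where
  categoryWithWeakEquivalences := ⟨M.weq⟩
  categoryWithFibrations := ⟨M.fib⟩
  categoryWithCofibrations := ⟨M.cof⟩
  cm2 :=
    { comp_mem := M.weq_comp
      of_postcomp := M.weq_of_comp_right
      of_precomp := M.weq_of_comp_left }
  cm3a := ⟨fun h => M.weq_retract _ _ (.of_retractArrow h)⟩
  cm3b := ⟨fun h => M.fib_retract _ _ (.of_retractArrow h)⟩
  cm3c := ⟨fun h => M.cof_retract _ _ (.of_retractArrow h)⟩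
  cm4a i p hi hw hp := M.lift_triv_cof_fib i p hi.mem hw.mem hp.mem
  cm4b i p hi hp hw := M.lift_cof_triv_fib i p hi.mem hp.mem hw.mem
  cm5a := ⟨fun f => by
    obtain ⟨Z, i, p, hi, hw, hp, fac⟩ := M.factor_triv_cof_fib f
    exact ⟨{ Z, i, p, fac, hi := ⟨hi, hw⟩, hp }⟩⟩
  cm5b := ⟨fun f => by
    obtain ⟨Z, i, p, hi, hp, hw, fac⟩ := M.factor_cof_triv_fib f
    exact ⟨{ Z, i, p, fac, hi, hp := ⟨hp, hw⟩ }⟩⟩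

/-- Every weak equivalence between fibrant objects is a universal weak
equivalence: its base change along any fibration is again a weak
equivalence. -/
theorem weq_between_fibrant_is_universal_weq
    {C : Type u} [Category.{v} C] [HasFiniteLimits C] [HasFiniteColimits C]
    (M : ModelStructure C) {A B X : C} (f : A ⟶ B) (p : X ⟶ B)
    (hf : M.weq f)
    (hA : M.fib (terminal.from A)) (hB : M.fib (terminal.from B))
    (hp : M.fib p) :
    M.weq (pullback.snd f p) := by
  let := M.toModelCategory
  have : WeakEquivalence f := ⟨hf⟩
  have : IsFibrant A := ⟨hA⟩
  have : IsFibrant B := ⟨hB⟩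
  have : Fibration p := ⟨hp⟩
  exact (weakEquivalence_pullback_snd_of_isFibrant f p).mem
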